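/- The limit as x → 0⁺ of (B(x) − A(x))/x^5 equals 3/2^17; in particular the constant 3/2^17 in the lower bound 3/2^17·x^5 < B(x) − A(x) is optimal (cannot be replaced by any larger constant). -/

import Mathlib

/-!
Both `A` and `B` have the Taylor polynomial `P₄(x) = 1 + x/4 + x²/64 + x³/256 + 25x⁴/16384` at `0`, and their
coefficients of `x⁵` are `95/2¹⁷` for `A` and `49/2¹⁶` for `B`, which differ by `3/2¹⁷`. The power series of `B` has
coefficients in `[0, 1]`, so its tail after `x⁵` is `O(x⁶)`. For `A`, rationalising the
square root turns `(P₄(x) - A(x)) / x⁵` into an expression continuous at `0`. Optimality of the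
constant follows because any admissible `c` is a lower bound for `(B - A)/x⁵` near `0`.
-/

open Real Filter

/-- The series `B(x) = ∑ ((1/(2n-1))·(1/4ⁿ)·C(2n,n))²·xⁿ`. -/
noncomputable def Bfun (x : ℝ) : ℝ :=
  ∑' n : ℕ, ((1 / (2 * (n : ℝ) - 1)) * (1 / 4 ^ n) * (Nat.choose (2 * n) n)) ^ 2 * x ^ n

/-- The function `A(x) = 1 + 3x/(10 + √(4 - 3x))`. -/
noncomputable def Afun (x : ℝ) : ℝ := 1 + 3 * x / (10 + Real.sqrt (4 - 3 * x))

open Topology Finset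

section PowerSeriesTail

variable {𝕜 : Type*} [NormedField 𝕜] [CompleteSpace 𝕜] {a : ℕ → 𝕜} {C : ℝ}

theorem norm_tsum_mul_pow_sub_sum_range_le (ha : ∀ n, ‖a n‖ ≤ C) {x : 𝕜} (hx : ‖x‖ < 1)
    (N : ℕ) :
    ‖∑' n, a n * x ^ n - ∑ n ∈ range N, a n * x ^ n‖ ≤ C * ‖x‖ ^ N * (1 - ‖x‖)⁻¹ := by
  have hbound : ∀ n, ‖a n * x ^ n‖ ≤ C * ‖x‖ ^ n := fun n => by
    rw [norm_mul, norm_pow]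
    exact mul_le_mul_of_nonneg_right (ha n) (by positivity)
  have hgeom : HasSum (fun n => C * ‖x‖ ^ n) (C * (1 - ‖x‖)⁻¹) :=
    (hasSum_geometric_of_lt_one (norm_nonneg x) hx).mul_left C
  have htail : ∑' n, a n * x ^ n - ∑ n ∈ range N, a n * x ^ n
      = ∑' n, a (n + N) * x ^ (n + N) := by
    rw [← (hgeom.summable.of_norm_bounded hbound).sum_add_tsum_nat_add N, add_sub_cancel_left]
  have hgeom_tail : HasSum (fun n => C * ‖x‖ ^ (n + N)) (C * ‖x‖ ^ N * (1 - ‖x‖)⁻¹) := by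
    have hshift : (fun n => C * ‖x‖ ^ (n + N)) = fun n => C * ‖x‖ ^ N * ‖x‖ ^ n := by
      funext n; ring
    rw [hshift]
    exact (hasSum_geometric_of_lt_one (norm_nonneg x) hx).mul_left _
  rw [htail]
  exact tsum_of_norm_bounded hgeom_tail fun n => hbound (n + N)

theorem tendsto_tsum_mul_pow_sub_sum_range_div_pow (ha : ∀ n, ‖a n‖ ≤ C) (N : ℕ) :
    Tendsto (fun x : 𝕜 => (∑' n, a n * x ^ n - ∑ n ∈ range (N + 1), a n * x ^ n) / x ^ N)
      (𝓝 0) (𝓝 0) := by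
  have hC : 0 ≤ C := (norm_nonneg _).trans (ha 0)
  refine squeeze_zero_norm' (a := fun x => C * ‖x‖ * (1 - ‖x‖)⁻¹) ?_ ?_
  · filter_upwards [eventually_norm_sub_lt (0 : 𝕜) one_pos] with x hx
    rw [sub_zero] at hx
    rw [norm_div, norm_pow]
    refine div_le_of_le_mul₀ (by positivity) (by have := hx.le; positivity) ?_
    calc _ ≤ C * ‖x‖ ^ (N + 1) * (1 - ‖x‖)⁻¹ := norm_tsum_mul_pow_sub_sum_range_le ha hx _
      _ = _ := by ring
  · have hcont : ContinuousAt (fun x : 𝕜 => C * ‖x‖ * (1 - ‖x‖)⁻¹) 0 :=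
      (continuous_const.mul continuous_norm).continuousAt.mul
        ((continuous_const.sub continuous_norm).continuousAt.inv₀ (by simp))
    simpa using hcont.tendsto

end PowerSeriesTail

noncomputable def bCoeff (n : ℕ) : ℝ :=
  ((1 / (2 * (n : ℝ) - 1)) * (1 / 4 ^ n) * (Nat.choose (2 * n) n)) ^ 2

theorem Bfun_eq_tsum (x : ℝ) : Bfun x = ∑' n, bCoeff n * x ^ n := rfl

theorem abs_bCoeff_le_one (n : ℕ) : |bCoeff n| ≤ 1 := by
  have hodd : |1 / (2 * (n : ℝ) - 1)| ≤ 1 := by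
    rw [abs_div, abs_one]
    refine div_le_one_of_le₀ ?_ (abs_nonneg _)
    rcases n with _ | n
    · norm_num
    · rw [abs_of_pos (by push_cast; linarith)]
      push_cast; linarith
  have hcentral : |1 / 4 ^ n * (Nat.choose (2 * n) n : ℝ)| ≤ 1 := by
    have h := Nat.choose_le_two_pow (2 * n) n
    rw [pow_mul] at h
    rw [abs_of_nonneg (by positivity), one_div, inv_mul_le_iff₀ (by positivity), mul_one]
    exact_mod_cast h
  rw [bCoeff, abs_pow, mul_assoc, abs_mul]
  exact pow_le_one₀ (by positivity) (mul_le_one₀ hodd (abs_nonneg _) hcentral)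

/-- The common degree-4 Taylor polynomial of `A` and `B` at `0`. -/
noncomputable def taylor4 (x : ℝ) : ℝ := 1 + x / 4 + x ^ 2 / 64 + x ^ 3 / 256 + 25 * x ^ 4 / 16384

theorem sum_range_six_bCoeff_mul_pow (x : ℝ) :
    ∑ n ∈ range 6, bCoeff n * x ^ n = taylor4 x + 49 / 65536 * x ^ 5 := by
  simp only [bCoeff, taylor4, sum_range_succ, sum_range_zero]
  norm_num [Nat.choose]
  ring

theorem tendsto_Bfun_sub_taylor4_div_pow_five :
    Tendsto (fun x => (Bfun x - taylor4 x) / x ^ 5) (𝓝[≠] 0) (𝓝 (49 / 65536)) := by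
  have htail := tendsto_tsum_mul_pow_sub_sum_range_div_pow
    (fun n => (Real.norm_eq_abs _).trans_le (abs_bCoeff_le_one n)) 5
  rw [← zero_add (49 / 65536 : ℝ)]
  refine ((tendsto_nhdsWithin_of_tendsto_nhds htail).add_const _).congr' ?_
  filter_upwards [self_mem_nhdsWithin] with x (hx : x ≠ 0)
  rw [sum_range_six_bCoeff_mul_pow, Bfun_eq_tsum]
  field_simp
  ring

/-- `taylor4 x = 1 + x * polyV x`, and for `s = √(4 - 3x)` one has
`(10 V - 3)² - V² s² = x⁴ W`: this rationalises `taylor4 x - Afun x`. -/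
noncomputable def polyV (x : ℝ) : ℝ := 1 / 4 + x / 64 + x ^ 2 / 256 + 25 * x ^ 3 / 16384

noncomputable def polyW (x : ℝ) : ℝ :=
  285 / 32768 + 699 / 524288 * x + 2175 / 8388608 * x ^ 2 + 1875 / 268435456 * x ^ 3

theorem taylor4_sub_Afun_div_pow_five {x : ℝ} (hx : x ≠ 0) (hx4 : 3 * x ≤ 4)
    (hden : 10 * polyV x - 3 - polyV x * √(4 - 3 * x) ≠ 0) :
    (taylor4 x - Afun x) / x ^ 5 =
      polyW x / ((10 + √(4 - 3 * x)) * (10 * polyV x - 3 - polyV x * √(4 - 3 * x))) := by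
  rw [Afun]
  set s := √(4 - 3 * x)
  have hs2 : s ^ 2 = 4 - 3 * x := Real.sq_sqrt (by linarith)
  have h10 : 10 + s ≠ 0 := by positivity
  have hrat : (10 * polyV x - 3 + polyV x * s) * (10 * polyV x - 3 - polyV x * s)
      = x ^ 4 * polyW x := by
    unfold polyV polyW
    linear_combination (-(1/4 + x/64 + x^2/256 + 25*x^3/16384) ^ 2) * hs2
  rw [div_eq_div_iff (pow_ne_zero 5 hx) (mul_ne_zero h10 hden)]
  unfold taylor4
  field_simp
  unfold polyV at hrat ⊢
  linear_combination (4 * 64 * 256 * 16384 * x) * hrat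

theorem tendsto_taylor4_sub_Afun_div_pow_five :
    Tendsto (fun x => (taylor4 x - Afun x) / x ^ 5) (𝓝[≠] 0) (𝓝 (-95 / 131072)) := by
  have hsqrt4 : √(4 : ℝ) = 2 := by
    rw [show (4 : ℝ) = 2 ^ 2 by norm_num, Real.sqrt_sq zero_le_two]
  have hden : ContinuousAt (fun x => 10 * polyV x - 3 - polyV x * √(4 - 3 * x)) 0 := by
    unfold polyV; fun_prop
  have hden0 : 10 * polyV 0 - 3 - polyV 0 * √(4 - 3 * 0) ≠ 0 := by
    norm_num [polyV, hsqrt4]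
  have hlim : ContinuousAt (fun x =>
      polyW x / ((10 + √(4 - 3 * x)) * (10 * polyV x - 3 - polyV x * √(4 - 3 * x)))) 0 := by
    refine ContinuousAt.div (by unfold polyW; fun_prop) (by fun_prop) ?_
    exact mul_ne_zero (by positivity) hden0
  have hvalue : polyW 0 / ((10 + √(4 - 3 * 0)) * (10 * polyV 0 - 3 - polyV 0 * √(4 - 3 * 0)))
      = -95 / 131072 := by
    norm_num [polyV, polyW, hsqrt4]
  rw [← hvalue]
  refine (tendsto_nhdsWithin_of_tendsto_nhds hlim.tendsto).congr' ?_
  filter_upwards [self_mem_nhdsWithin,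
    nhdsWithin_le_nhds (hden.eventually_ne hden0),
    nhdsWithin_le_nhds (eventually_le_nhds (show (0 : ℝ) < 4 / 3 by norm_num))]
    with x (hx : x ≠ 0) hdenx hx4
  exact (taylor4_sub_Afun_div_pow_five hx (by linarith) hdenx).symm

theorem theta_limit_and_optimality :
    Tendsto (fun x : ℝ => (Bfun x - Afun x) / x ^ 5) (nhdsWithin 0 (Set.Ioi 0))
        (nhds (3 / 2 ^ 17)) ∧
      ∀ c : ℝ, (∀ x : ℝ, 0 < x → x ≤ 1 → c * x ^ 5 < Bfun x - Afun x) → c ≤ 3 / 2 ^ 17 := by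
  have hlim : Tendsto (fun x : ℝ => (Bfun x - Afun x) / x ^ 5) (𝓝[>] 0) (𝓝 (3 / 2 ^ 17)) := by
    have h := (tendsto_Bfun_sub_taylor4_div_pow_five.add
      tendsto_taylor4_sub_Afun_div_pow_five).mono_left
        (nhdsWithin_mono 0 fun x (hx : x ∈ Set.Ioi 0) => ne_of_gt hx)
    convert h using 2 with x
    · rw [← add_div, sub_add_sub_cancel]
    · norm_num
  refine ⟨hlim, fun c hc => ge_of_tendsto hlim ?_⟩
  filter_upwards [Ioc_mem_nhdsGT one_pos] with x ⟨hx0, hx1⟩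
  exact (le_div_iff₀ (by positivity)).2 (hc x hx0 hx1).le
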